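/- Define f(n) = (2n+1) + Σ_{i=1}^{n} (−1)^i (2n+1−2i) [C(2n,i)/2^i + C(2n,i−1)/(4·2^{i−1})]. Then f(2m) < 0 for all integers m ≥ 2. -/

import Mathlib

/-!
Creative telescoping (Zeilberger's algorithm). Writing `t_n(i)` for the summands of `fSeq4 n`,
the combination `(36m+41) t_{2m}(i) - 16(36m+5) t_{2m+2}(i)` is, up to a positive factor, the
difference `G(i-1) - G(i)` of an explicit hypergeometric certificate `G`. Summing over `i` yields
the first-order recursion `16(36m+5) f(2m+2) = (36m+41) f(2m) - q_m` with an explicit `q_m > 0`,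
so negativity propagates from `f(4) = -7/8`.
-/

open Finset

/-- `f(n) = (2n+1) + Σ_{i=1}^{n} (−1)^i (2n+1−2i) [C(2n,i)/2^i + C(2n,i−1)/(4·2^{i−1})]`. -/
noncomputable def fSeq4 (n : ℕ) : ℝ :=
  (2 * n + 1 : ℝ) +
    ∑ i ∈ Icc 1 n, (-1 : ℝ) ^ i * ((2 * n + 1 : ℝ) - 2 * i) *
      ((Nat.choose (2 * n) i : ℝ) / 2 ^ i +
        (Nat.choose (2 * n) (i - 1) : ℝ) / (4 * 2 ^ (i - 1)))

theorem Nat.cast_choose_succ_mul {R : Type*} [CommRing R] (n k : ℕ) :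
    (n.choose (k + 1) : R) * (k + 1) = n.choose k * (n - k) := by
  rcases le_or_gt k n with h | h
  · have := congrArg (Nat.cast (R := R)) (n.choose_succ_right_eq k)
    push_cast [Nat.cast_sub h] at this
    exact this
  · simp [Nat.choose_eq_zero_of_lt h, Nat.choose_eq_zero_of_lt (h.trans (Nat.lt_succ_self k))]

theorem Nat.cast_choose_mul_succ {R : Type*} [CommRing R] (n k : ℕ) :
    (n.choose k : R) * (n + 1) = (n + 1).choose k * (n + 1 - k) := by
  rcases le_or_gt k (n + 1) with h | h
  · have := congrArg (Nat.cast (R := R)) (n.choose_mul_succ_eq k)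
    push_cast [Nat.cast_sub h] at this
    exact this
  · simp [Nat.choose_eq_zero_of_lt h, Nat.choose_eq_zero_of_lt (Nat.lt_of_succ_lt h)]

theorem Nat.cast_choose_mul_prod_range {R : Type*} [CommRing R] (n k l : ℕ) :
    (n.choose k : R) * ∏ j ∈ range l, ((n : R) + j + 1) =
      (n + l).choose k * ∏ j ∈ range l, ((n : R) + j + 1 - k) := by
  induction l with
  | zero => simp
  | succ l ih =>
    have step := Nat.cast_choose_mul_succ (R := R) (n + l) k
    push_cast at step
    rw [prod_range_succ, prod_range_succ, ← mul_assoc, ih, ← add_assoc n l 1]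
    linear_combination (∏ j ∈ range l, ((n : R) + j + 1 - k)) * step

namespace FSeq4

noncomputable def term (n i : ℕ) : ℝ :=
  (-1 : ℝ) ^ i * ((2 * n + 1 : ℝ) - 2 * i) *
    ((Nat.choose (2 * n) i : ℝ) / 2 ^ i + (Nat.choose (2 * n) (i - 1) : ℝ) / (4 * 2 ^ (i - 1)))

/-- Found by Zeilberger's algorithm; `certificate_sub_succ` is the identity it certifies. -/
noncomputable def certPoly (m x : ℝ) : ℝ :=
  (17232 + 287600 * m + 1705760 * m ^ 2 + 4683520 * m ^ 3 + 6443008 * m ^ 4 + 4300800 * m ^ 5 +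
      1105920 * m ^ 6)
  - x * (20268 + 298048 * m + 1449520 * m ^ 2 + 3002816 * m ^ 3 + 2732288 * m ^ 4 + 893952 * m ^ 5)
  + x ^ 2 * (11070 + 121568 * m + 409808 * m ^ 2 + 522880 * m ^ 3 + 218880 * m ^ 4)
  - x ^ 3 * (4305 + 29364 * m + 54608 * m ^ 2 + 28224 * m ^ 3)
  + x ^ 4 * (943 + 3288 * m + 2160 * m ^ 2)
  - x ^ 5 * (82 + 72 * m)

noncomputable def certificate (m k : ℕ) : ℝ :=
  (-1) ^ k * (Nat.choose (4 * m + 4) k : ℝ) / 2 ^ k * certPoly m k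

theorem certificate_sub_succ (m k : ℕ) :
    2 * ((4 * m + 1) * (4 * m + 2) * (4 * m + 3) * (4 * m + 4)) *
        ((36 * m + 41) * term (2 * m) (k + 1) - 16 * (36 * m + 5) * term (2 * m + 2) (k + 1)) =
      certificate m k - certificate m (k + 1) := by
  have shift := Nat.cast_choose_mul_prod_range (R := ℝ) (4 * m) (k + 1) 4
  have shift' := Nat.cast_choose_mul_prod_range (R := ℝ) (4 * m) k 4
  have succ := Nat.cast_choose_succ_mul (R := ℝ) (4 * m + 4) k
  simp only [prod_range_succ, prod_range_zero] at shift shift'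
  push_cast at shift shift' succ
  have hD : ((4 * m + 1) * (4 * m + 2) * (4 * m + 3) * (4 * m + 4) : ℝ) ≠ 0 := by positivity
  have hk : (k : ℝ) + 1 ≠ 0 := by positivity
  have h1 : (Nat.choose (4 * m) (k + 1) : ℝ) = Nat.choose (4 * m + 4) (k + 1) *
      ((4 * m + 1 - (k + 1)) * (4 * m + 2 - (k + 1)) * (4 * m + 3 - (k + 1)) *
        (4 * m + 4 - (k + 1))) / ((4 * m + 1) * (4 * m + 2) * (4 * m + 3) * (4 * m + 4)) := by
    rw [eq_div_iff hD]; linear_combination shift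
  have h2 : (Nat.choose (4 * m) k : ℝ) = Nat.choose (4 * m + 4) k *
      ((4 * m + 1 - k) * (4 * m + 2 - k) * (4 * m + 3 - k) * (4 * m + 4 - k)) /
        ((4 * m + 1) * (4 * m + 2) * (4 * m + 3) * (4 * m + 4)) := by
    rw [eq_div_iff hD]; linear_combination shift'
  have h3 : (Nat.choose (4 * m + 4) (k + 1) : ℝ) =
      Nat.choose (4 * m + 4) k * (4 * m + 4 - k) / (k + 1) := by
    rw [eq_div_iff hk]; linear_combination succ
  simp only [term, certificate, certPoly, Nat.add_sub_cancel, show 2 * (2 * m) = 4 * m by ring,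
    show 2 * (2 * m + 2) = 4 * m + 4 by ring]
  push_cast
  rw [h1, h2, h3]
  field_simp
  ring

theorem sum_range_term_telescope (m : ℕ) :
    2 * ((4 * m + 1) * (4 * m + 2) * (4 * m + 3) * (4 * m + 4)) *
        ((36 * m + 41) * ∑ k ∈ range (2 * m), term (2 * m) (k + 1) -
          16 * (36 * m + 5) * ∑ k ∈ range (2 * m), term (2 * m + 2) (k + 1)) =
      certificate m 0 - certificate m (2 * m) := by
  rw [← sum_range_sub', mul_sum, mul_sum, ← sum_sub_distrib, mul_sum]
  exact sum_congr rfl fun k _ => certificate_sub_succ m k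

/-- The constant terms `2n + 1` of `fSeq4` are the telescoping identity at `i = 0`. -/
theorem certificate_zero (m : ℕ) :
    certificate m 0 = 2 * ((4 * m + 1) * (4 * m + 2) * (4 * m + 3) * (4 * m + 4)) *
      (16 * (36 * m + 5) * (4 * m + 5) - (36 * m + 41) * (4 * m + 1)) := by
  simp only [certificate, certPoly, Nat.choose_zero_right]
  push_cast
  ring

theorem certificate_add_top_terms (m : ℕ) :
    certificate m (2 * m) + 32 * ((4 * m + 1) * (4 * m + 2) * (4 * m + 3) * (4 * m + 4)) *
        (36 * m + 5) * (term (2 * m + 2) (2 * m + 1) + term (2 * m + 2) (2 * m + 2)) =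
      -(2 * ((4 * m + 1) * (4 * m + 2) * (4 * m + 3) * (4 * m + 4)) *
        (3 * (252 * m ^ 3 + 435 * m ^ 2 + 97 * m + 7) / ((m + 1) * (2 * m + 1)) *
          Nat.choose (4 * m) (2 * m) / 4 ^ m)) := by
  have shift := Nat.cast_choose_mul_prod_range (R := ℝ) (4 * m) (2 * m) 4
  have succ₀ := Nat.cast_choose_succ_mul (R := ℝ) (4 * m + 4) (2 * m)
  have succ₁ := Nat.cast_choose_succ_mul (R := ℝ) (4 * m + 4) (2 * m + 1)
  simp only [prod_range_succ, prod_range_zero] at shift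
  push_cast at shift succ₀ succ₁
  have e0 : (Nat.choose (4 * m) (2 * m) : ℝ) = Nat.choose (4 * m + 4) (2 * m) *
      ((2 * m + 1) * (2 * m + 2) * (2 * m + 3) * (2 * m + 4)) /
        ((4 * m + 1) * (4 * m + 2) * (4 * m + 3) * (4 * m + 4)) := by
    rw [eq_div_iff (by positivity)]; linear_combination shift
  have e1 : (Nat.choose (4 * m + 4) (2 * m + 1) : ℝ) =
      Nat.choose (4 * m + 4) (2 * m) * (2 * m + 4) / (2 * m + 1) := by
    rw [eq_div_iff (by positivity)]; linear_combination succ₀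
  have e2 : (Nat.choose (4 * m + 4) (2 * m + 2) : ℝ) =
      Nat.choose (4 * m + 4) (2 * m + 1) * (2 * m + 3) / (2 * m + 2) := by
    rw [eq_div_iff (by positivity)]; linear_combination succ₁
  simp only [certificate, term, certPoly, show 2 * (2 * m + 2) = 4 * m + 4 by ring,
    show 2 * m + 2 - 1 = 2 * m + 1 by omega, Nat.add_sub_cancel]
  rw [e0, e2, e1]
  simp only [pow_succ, pow_mul, show (2 : ℝ) ^ 2 = 4 by norm_num]
  push_cast
  field_simp
  ring

end FSeq4

open FSeq4

theorem fSeq4_eq_add_sum_term (n : ℕ) :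
    fSeq4 n = 2 * n + 1 + ∑ k ∈ range n, term n (k + 1) := by
  rw [fSeq4, range_eq_Ico, sum_Ico_add' (term n) 0 n 1, zero_add, Ico_add_one_right_eq_Icc]
  rfl

theorem fSeq4_two_mul_add_two (m : ℕ) :
    16 * (36 * m + 5) * fSeq4 (2 * m + 2) = (36 * m + 41) * fSeq4 (2 * m) -
      3 * (252 * m ^ 3 + 435 * m ^ 2 + 97 * m + 7) / ((m + 1) * (2 * m + 1)) *
        Nat.choose (4 * m) (2 * m) / 4 ^ m := by
  have hD : 2 * ((4 * m + 1) * (4 * m + 2) * (4 * m + 3) * (4 * m + 4) : ℝ) ≠ 0 := by positivity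
  apply mul_left_cancel₀ hD
  rw [fSeq4_eq_add_sum_term, fSeq4_eq_add_sum_term, sum_range_succ, sum_range_succ,
    show 2 * m + 1 + 1 = 2 * m + 2 by ring]
  push_cast
  linear_combination -sum_range_term_telescope m - certificate_zero m + certificate_add_top_terms m

theorem fSeq4_four : fSeq4 4 = -7 / 8 := by
  have f0 : fSeq4 0 = 1 := by simp [fSeq4]
  have f2 := fSeq4_two_mul_add_two 0
  have f4 := fSeq4_two_mul_add_two 1
  norm_num [f0, Nat.choose] at f2 f4
  linarith

/-- `f(2m) < 0` for all integers `m ≥ 2`. -/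
theorem stmt_17 (m : ℕ) (hm : 2 ≤ m) : fSeq4 (2 * m) < 0 := by
  induction m, hm using Nat.le_induction with
  | base => norm_num [fSeq4_four]
  | succ m _ ih =>
    have hq : 0 < 3 * (252 * m ^ 3 + 435 * m ^ 2 + 97 * m + 7) / ((m + 1) * (2 * m + 1)) *
        (Nat.choose (4 * m) (2 * m) : ℝ) / 4 ^ m := by
      have : 0 < (Nat.choose (4 * m) (2 * m) : ℝ) := by exact_mod_cast Nat.choose_pos (by omega)
      positivity
    have hneg := mul_neg_of_pos_of_neg (by positivity : (0 : ℝ) < 36 * m + 41) ih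
    refine neg_of_mul_neg_right (a := 16 * (36 * (m : ℝ) + 5)) ?_ (by positivity)
    rw [mul_add_one, fSeq4_two_mul_add_two]
    linarith
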